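/- arXiv:solv-int/9803002 — 4 statements merged into one kernel-verified Lean document; each statement's English description precedes it below -/
import Mathlib

section
/- Let N ≥ 2, fix p with 1 ≤ p ≤ N, and define c : ZMod N → ZMod N → ZMod N → ℝ by c i j k = 1 if k = i + j - p (in ZMod N) and 0 otherwise. If N > 2, then c does NOT satisfy the coupled condition; that is, there exist indices i, j, l, n in ZMod N with ∑_k c i j k * c k n l ≠ ∑_k c i k l * c k j n. -/
theorem stmt2 (N : ℕ) [NeZero N] (hN : 2 < N) (p : ℕ) (hp1 : 1 ≤ p) (hpN : p ≤ N)
    (c : ZMod N → ZMod N → ZMod N → ℝ)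
    (hc : ∀ i j k, c i j k = if k = i + j - (p : ZMod N) then 1 else 0) :
    ∃ i j l n : ZMod N,
      (∑ k, c i j k * c k n l) ≠ (∑ k, c i k l * c k j n) := by
  have h2 : (2 : ZMod N) ≠ 0 := by
    intro h
    rw [show (2:ZMod N) = ((2:ℕ):ZMod N) by push_cast; ring,
      ZMod.natCast_eq_zero_iff] at h
    have := Nat.le_of_dvd two_pos h
    omega
  refine ⟨0, (p:ZMod N)+1, 0, (p:ZMod N)+1, ?_⟩
  simp only [hc]
  have hL : (∑ k : ZMod N, (if k = 0 + ((p:ZMod N)+1) - (p:ZMod N) then (1:ℝ) else 0) *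
      (if (0:ZMod N) = k + ((p:ZMod N)+1) - (p:ZMod N) then 1 else 0)) = 0 := by
    rw [Finset.sum_eq_zero]
    intro k _
    by_cases h : k = 0 + ((p:ZMod N)+1) - (p:ZMod N)
    · have hk : k = 1 := by rw [h]; ring
      subst hk
      have hfalse : ¬ ((0:ZMod N) = 1 + ((p:ZMod N)+1) - (p:ZMod N)) := by
        intro h0
        apply h2
        have he : (1:ZMod N) + ((p:ZMod N)+1) - (p:ZMod N) = 2 := by ring
        rw [he] at h0; exact h0.symm
      rw [if_neg hfalse, mul_zero]
    · rw [if_neg h, zero_mul]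
  have hR : (∑ k : ZMod N, (if (0:ZMod N) = 0 + k - (p:ZMod N) then (1:ℝ) else 0) *
      (if (p:ZMod N)+1 = k + ((p:ZMod N)+1) - (p:ZMod N) then 1 else 0)) = 1 := by
    rw [Finset.sum_eq_single ((p:ZMod N))]
    · have h1 : (0:ZMod N) = 0 + (p:ZMod N) - (p:ZMod N) := by ring
      have h2' : (p:ZMod N)+1 = (p:ZMod N) + ((p:ZMod N)+1) - (p:ZMod N) := by ring
      rw [if_pos h1, if_pos h2', one_mul]
    · intro k _ hk
      have hfalse : ¬ ((0:ZMod N) = 0 + k - (p:ZMod N)) := by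
        intro h0
        exact hk (by linear_combination -h0)
      rw [if_neg hfalse, zero_mul]
    · intro h; exact absurd (Finset.mem_univ _) h
  rw [hL, hR]
  norm_num
end

section
/- Let N ≥ 1 and let p be an integer with 2 - N ≤ p ≤ 1. Define c on indices i, j, k ∈ {1, ..., N} (as integers, not modular) by c i j k = 1 if i - j = k - p and 0 otherwise. Then c satisfies the coupled condition: for all i, j, l, n ∈ {1,...,N}, ∑_{k=1}^N c i j k * c k n l = ∑_{k=1}^N c i k l * c k j n = ∑_{k=1}^N c i n k * c k j l. Moreover, each of these sums equals 1 if i - j - n - l + 2p = 0 and 0 otherwise. -/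
lemma aux_sum (S : Finset ℤ) (a b : ℤ) :
    (∑ k ∈ S, ((if k = a then (1:ℝ) else 0) * (if k = b then 1 else 0)))
      = if a ∈ S ∧ a = b then 1 else 0 := by
  simp only [ite_mul, one_mul, zero_mul]
  rw [Finset.sum_ite_eq' S a (fun k => if k = b then (1:ℝ) else 0)]
  by_cases h : a = b <;> by_cases h2 : a ∈ S <;> simp [h, h2]

theorem stmt4 (N : ℕ) (hN : 1 ≤ N) (p : ℤ) (hp1 : 2 - (N : ℤ) ≤ p) (hp2 : p ≤ 1)
    (c : ℤ → ℤ → ℤ → ℝ)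
    (hc : ∀ i j k, c i j k = if i - j = k - p then 1 else 0) :
    ∀ i j l n : ℤ, i ∈ Finset.Icc 1 (N : ℤ) → j ∈ Finset.Icc 1 (N : ℤ) →
      l ∈ Finset.Icc 1 (N : ℤ) → n ∈ Finset.Icc 1 (N : ℤ) →
      (∑ k ∈ Finset.Icc 1 (N : ℤ), c i j k * c k n l)
        = (∑ k ∈ Finset.Icc 1 (N : ℤ), c i k l * c k j n) ∧
      (∑ k ∈ Finset.Icc 1 (N : ℤ), c i k l * c k j n)
        = (∑ k ∈ Finset.Icc 1 (N : ℤ), c i n k * c k j l) ∧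
      (∑ k ∈ Finset.Icc 1 (N : ℤ), c i j k * c k n l)
        = (if i - j - n - l + 2 * p = 0 then 1 else 0) := by
  intro i j l n hi hj hl hn
  rw [Finset.mem_Icc] at hi hj hl hn
  have S1 : (∑ k ∈ Finset.Icc 1 (N : ℤ), c i j k * c k n l)
      = if i - j - n - l + 2 * p = 0 then (1:ℝ) else 0 := by
    rw [show (∑ k ∈ Finset.Icc 1 (N : ℤ), c i j k * c k n l)
        = ∑ k ∈ Finset.Icc 1 (N : ℤ),
            ((if k = i - j + p then (1:ℝ) else 0) * (if k = n + l - p then 1 else 0)) from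
      Finset.sum_congr rfl (fun k _ => by
        rw [hc, hc]; exact congrArg₂ (· * ·)
          (if_congr (by omega) rfl rfl) (if_congr (by omega) rfl rfl))]
    rw [aux_sum]
    simp only [Finset.mem_Icc]
    exact if_congr (by omega) rfl rfl
  have S2 : (∑ k ∈ Finset.Icc 1 (N : ℤ), c i k l * c k j n)
      = if i - j - n - l + 2 * p = 0 then (1:ℝ) else 0 := by
    rw [show (∑ k ∈ Finset.Icc 1 (N : ℤ), c i k l * c k j n)
        = ∑ k ∈ Finset.Icc 1 (N : ℤ),
            ((if k = i - l + p then (1:ℝ) else 0) * (if k = j + n - p then 1 else 0)) from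
      Finset.sum_congr rfl (fun k _ => by
        rw [hc, hc]; exact congrArg₂ (· * ·)
          (if_congr (by omega) rfl rfl) (if_congr (by omega) rfl rfl))]
    rw [aux_sum]
    simp only [Finset.mem_Icc]
    exact if_congr (by omega) rfl rfl
  have S3 : (∑ k ∈ Finset.Icc 1 (N : ℤ), c i n k * c k j l)
      = if i - j - n - l + 2 * p = 0 then (1:ℝ) else 0 := by
    rw [show (∑ k ∈ Finset.Icc 1 (N : ℤ), c i n k * c k j l)
        = ∑ k ∈ Finset.Icc 1 (N : ℤ),
            ((if k = i - n + p then (1:ℝ) else 0) * (if k = j + l - p then 1 else 0)) from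
      Finset.sum_congr rfl (fun k _ => by
        rw [hc, hc]; exact congrArg₂ (· * ·)
          (if_congr (by omega) rfl rfl) (if_congr (by omega) rfl rfl))]
    rw [aux_sum]
    simp only [Finset.mem_Icc]
    exact if_congr (by omega) rfl rfl
  exact ⟨S1.trans S2.symm, S2.trans S3.symm, S1⟩
end

section
/- Let N ≥ 1 and let p be an integer with N ≤ p ≤ 2N - 1. Define c on indices i, j, k ∈ {1, ..., N} by c i j k = 1 if i - j = k - p and 0 otherwise. Then c satisfies the coupled condition: for all i, j, l, n ∈ {1,...,N}, ∑_{k=1}^N c i j k * c k n l = ∑_{k=1}^N c i k l * c k j n = ∑_{k=1}^N c i n k * c k j l. -/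
lemma key5 (N a b : ℤ) :
    (∑ k ∈ Finset.Icc 1 N, ((if k = a then (1:ℝ) else 0) * (if k = b then 1 else 0)))
      = if a = b ∧ a ∈ Finset.Icc 1 N then 1 else 0 := by
  have h : ∀ k : ℤ, (if k = a then (1:ℝ) else 0) * (if k = b then 1 else 0)
      = if k = a then (if a = b then (1:ℝ) else 0) else 0 := by
    intro k
    by_cases h1 : k = a <;> by_cases h2 : k = b <;> simp_all
  simp_rw [h]
  rw [Finset.sum_ite_eq' (Finset.Icc 1 N) a]
  by_cases ha : a ∈ Finset.Icc 1 N <;> by_cases hab : a = b <;> simp_all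

theorem stmt5 (N : ℕ) (hN : 1 ≤ N) (p : ℤ) (hp1 : (N : ℤ) ≤ p) (hp2 : p ≤ 2 * (N : ℤ) - 1)
    (c : ℤ → ℤ → ℤ → ℝ)
    (hc : ∀ i j k, c i j k = if i - j = k - p then 1 else 0) :
    ∀ i j l n : ℤ, i ∈ Finset.Icc 1 (N : ℤ) → j ∈ Finset.Icc 1 (N : ℤ) →
      l ∈ Finset.Icc 1 (N : ℤ) → n ∈ Finset.Icc 1 (N : ℤ) →
      (∑ k ∈ Finset.Icc 1 (N : ℤ), c i j k * c k n l)
        = (∑ k ∈ Finset.Icc 1 (N : ℤ), c i k l * c k j n) ∧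
      (∑ k ∈ Finset.Icc 1 (N : ℤ), c i k l * c k j n)
        = (∑ k ∈ Finset.Icc 1 (N : ℤ), c i n k * c k j l) := by
  intro i j l n hi hj hl hn
  simp only [Finset.mem_Icc] at hi hj hl hn
  have e1 : (∑ k ∈ Finset.Icc 1 (N : ℤ), c i j k * c k n l)
      = if (i - j + p = l + n - p ∧ (i - j + p) ∈ Finset.Icc 1 (N:ℤ)) then 1 else 0 := by
    rw [← key5]
    apply Finset.sum_congr rfl
    intro k _
    rw [hc, hc]
    exact congrArg₂ (· * ·) (if_congr (by omega) rfl rfl) (if_congr (by omega) rfl rfl)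
  have e2 : (∑ k ∈ Finset.Icc 1 (N : ℤ), c i k l * c k j n)
      = if (i - l + p = j + n - p ∧ (i - l + p) ∈ Finset.Icc 1 (N:ℤ)) then 1 else 0 := by
    rw [← key5]
    apply Finset.sum_congr rfl
    intro k _
    rw [hc, hc]
    exact congrArg₂ (· * ·) (if_congr (by omega) rfl rfl) (if_congr (by omega) rfl rfl)
  have e3 : (∑ k ∈ Finset.Icc 1 (N : ℤ), c i n k * c k j l)
      = if (i - n + p = j + l - p ∧ (i - n + p) ∈ Finset.Icc 1 (N:ℤ)) then 1 else 0 := by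
    rw [← key5]
    apply Finset.sum_congr rfl
    intro k _
    rw [hc, hc]
    exact congrArg₂ (· * ·) (if_congr (by omega) rfl rfl) (if_congr (by omega) rfl rfl)
  rw [e1, e2, e3]
  constructor <;>
    · apply if_congr _ rfl rfl
      simp only [Finset.mem_Icc]
      omega
end

section
/- Let L be a Lie algebra over ℝ and Φ : L → L a linear map with vanishing Nijenhuis torsion, i.e., [Φ K, Φ S] = Φ [Φ K, S] + Φ [K, Φ S] - Φ² [K, S] for all K, S ∈ L. Suppose K ∈ L satisfies [K, Φ S] = Φ [K, S] for all S ∈ L (i.e., the Lie derivative of Φ along K vanishes). Then for all m, n ≥ 0, [Φ^m K, Φ^n K] = 0. -/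
theorem stmt9 (L : Type*) [LieRing L] [LieAlgebra ℝ L] (Φ : L →ₗ[ℝ] L)
    (hNij : ∀ K S : L, ⁅Φ K, Φ S⁆ = Φ ⁅Φ K, S⁆ + Φ ⁅K, Φ S⁆ - Φ (Φ ⁅K, S⁆))
    (K : L) (hK : ∀ S : L, ⁅K, Φ S⁆ = Φ ⁅K, S⁆) :
    ∀ m n : ℕ, ⁅Φ^[m] K, Φ^[n] K⁆ = 0 := by
  -- step: if X commutes with Φ in the Lie-derivative sense, so does Φ X
  have step : ∀ X : L, (∀ S : L, ⁅X, Φ S⁆ = Φ ⁅X, S⁆) →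
      ∀ S : L, ⁅Φ X, Φ S⁆ = Φ ⁅Φ X, S⁆ := by
    intro X hX S
    rw [hNij X S, hX S]
    abel
  -- for every m, Φ^m K commutes with Φ
  have hcomm : ∀ m : ℕ, ∀ S : L, ⁅Φ^[m] K, Φ S⁆ = Φ ⁅Φ^[m] K, S⁆ := by
    intro m
    induction m with
    | zero => exact hK
    | succ m ih =>
      intro S
      rw [Function.iterate_succ_apply']
      exact step _ ih S
  -- iterate it
  have hiter : ∀ m n : ℕ, ∀ S : L, ⁅Φ^[m] K, Φ^[n] S⁆ = Φ^[n] ⁅Φ^[m] K, S⁆ := by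
    intro m n
    induction n with
    | zero => intro S; rfl
    | succ n ih =>
      intro S
      rw [Function.iterate_succ_apply', Function.iterate_succ_apply', hcomm m, ih]
  intro m n
  rw [hiter m n K]
  have h0 : ⁅Φ^[m] K, K⁆ = 0 := by
    have h : ⁅K, Φ^[m] K⁆ = Φ^[m] ⁅K, K⁆ := hiter 0 m K
    rw [lie_self] at h
    rw [← lie_skew, h]
    simp [Function.iterate_fixed (map_zero Φ)]
  rw [h0]
  simp
end
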